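/- arXiv:2402.15128 — 2 statements merged into one kernel-verified Lean document; each statement's English description precedes it below -/
import Mathlib

section
/- Let m : ℝ → ℝ be continuous and integrable, and u = p * m with p(x) = (1/2)e^{-|x|}. Suppose there exists x₀ ∈ ℝ such that m(x) ≥ 0 for x ≤ x₀ and m(x) ≤ 0 for x ≥ x₀. Then u(x₀)² - u'(x₀)² ≤ 0, i.e. |u(x₀)| ≤ |u'(x₀)|. -/
/-!
Splitting the convolution at `x` gives `2 u = e^{-x} L + e^{x} R` with
`L x = ∫_{-∞}^x e^ξ m` and `R x = ∫_x^∞ e^{-ξ} m`, and the fundamental theorem of calculus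
gives `2 u' = e^{x} R - e^{-x} L`, the `m(x)` terms cancelling. Hence `u² - u'² = L R`, and
the sign condition makes `L x₀ ≥ 0 ≥ R x₀`.
-/

open MeasureTheory Real Set

noncomputable def pKer (x : ℝ) : ℝ := (1 / 2) * Real.exp (-|x|)

section HalfLineIntegral

variable {E : Type*} [NormedAddCommGroup E] [NormedSpace ℝ E] [CompleteSpace E] {f : ℝ → E}

theorem hasDerivAt_setIntegral_Iic (hf : Continuous f) (hi : ∀ a, IntegrableOn f (Iic a))
    (x : ℝ) : HasDerivAt (fun a => ∫ y in Iic a, f y) (f x) x := by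
  have heq : (fun a => ∫ y in Iic a, f y) =
      fun a => (∫ y in Iic x, f y) + ∫ y in x..a, f y := by
    funext a
    rw [← intervalIntegral.integral_Iic_sub_Iic (hi x) (hi a)]
    abel
  rw [heq]
  exact (intervalIntegral.integral_hasDerivAt_right (hf.intervalIntegrable _ _)
    (hf.stronglyMeasurableAtFilter _ _) hf.continuousAt).const_add _

theorem hasDerivAt_setIntegral_Ioi (hf : Continuous f) (hi : ∀ a, IntegrableOn f (Ioi a))
    (x : ℝ) : HasDerivAt (fun a => ∫ y in Ioi a, f y) (-f x) x := by
  have heq : (fun a => ∫ y in Ioi a, f y) =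
      fun a => (∫ y in Ioi x, f y) - ∫ y in x..a, f y := by
    funext a
    rw [← intervalIntegral.integral_Ioi_sub_Ioi' (hi x) (hi a)]
    abel
  rw [heq]
  exact (intervalIntegral.integral_hasDerivAt_right (hf.intervalIntegrable _ _)
    (hf.stronglyMeasurableAtFilter _ _) hf.continuousAt).const_sub _

end HalfLineIntegral

theorem continuous_pKer : Continuous pKer :=
  continuous_const.mul (continuous_exp.comp continuous_abs.neg)

theorem abs_pKer_le (x : ℝ) : |pKer x| ≤ 1 / 2 := by
  rw [pKer, abs_of_nonneg (by positivity)]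
  have : exp (-|x|) ≤ 1 := exp_le_one_iff.2 (neg_nonpos.2 (abs_nonneg x))
  linarith

theorem pKer_sub_of_le {x y : ℝ} (h : y ≤ x) : pKer (x - y) = exp (-x) * exp y / 2 := by
  rw [pKer, abs_of_nonneg (sub_nonneg.2 h), ← exp_add]
  ring_nf

theorem pKer_sub_of_lt {x y : ℝ} (h : x < y) : pKer (x - y) = exp x * exp (-y) / 2 := by
  rw [pKer, abs_of_neg (sub_neg.2 h), ← exp_add]
  ring_nf

namespace MeasureTheory.Integrable

variable {m : ℝ → ℝ}

theorem integrableOn_Iic_exp_mul (hm : Integrable m) (x : ℝ) :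
    IntegrableOn (fun y => exp y * m y) (Iic x) :=
  hm.integrableOn.bdd_mul (c := exp x) continuous_exp.aestronglyMeasurable <| by
    filter_upwards [ae_restrict_mem measurableSet_Iic] with y (hy : y ≤ x)
    simpa [abs_exp] using hy

theorem integrableOn_Ioi_exp_neg_mul (hm : Integrable m) (x : ℝ) :
    IntegrableOn (fun y => exp (-y) * m y) (Ioi x) :=
  hm.integrableOn.bdd_mul (c := exp (-x))
    (continuous_exp.comp continuous_neg).aestronglyMeasurable <| by
    filter_upwards [ae_restrict_mem measurableSet_Ioi] with y (hy : x < y)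
    simpa [abs_exp] using hy.le

theorem pKer_sub_mul (hm : Integrable m) (x : ℝ) : Integrable (fun y => pKer (x - y) * m y) :=
  hm.bdd_mul (c := 1 / 2)
    (continuous_pKer.comp (continuous_sub_left x)).aestronglyMeasurable <|
      .of_forall fun y => abs_pKer_le (x - y)

end MeasureTheory.Integrable

noncomputable def leftExpIntegral (m : ℝ → ℝ) (x : ℝ) : ℝ := ∫ y in Iic x, exp y * m y

noncomputable def rightExpIntegral (m : ℝ → ℝ) (x : ℝ) : ℝ :=
  ∫ y in Ioi x, exp (-y) * m y

section Convolution

variable {m : ℝ → ℝ}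

theorem integral_pKer_sub_mul (hm : Integrable m) (x : ℝ) :
    ∫ y, pKer (x - y) * m y =
      (exp (-x) * leftExpIntegral m x + exp x * rightExpIntegral m x) / 2 := by
  have hi := hm.pKer_sub_mul x
  rw [← intervalIntegral.integral_Iic_add_Ioi hi.integrableOn hi.integrableOn, leftExpIntegral,
    rightExpIntegral, ← integral_const_mul, ← integral_const_mul, add_div, ← integral_div,
    ← integral_div]
  congr 1
  · refine setIntegral_congr_fun measurableSet_Iic fun y (hy : y ≤ x) => ?_
    rw [pKer_sub_of_le hy]
    ring
  · refine setIntegral_congr_fun measurableSet_Ioi fun y (hy : x < y) => ?_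
    rw [pKer_sub_of_lt hy]
    ring

theorem hasDerivAt_integral_pKer_sub_mul (hmc : Continuous m) (hm : Integrable m) (x : ℝ) :
    HasDerivAt (fun x => ∫ y, pKer (x - y) * m y)
      ((exp x * rightExpIntegral m x - exp (-x) * leftExpIntegral m x) / 2) x := by
  have hL : HasDerivAt (leftExpIntegral m) (exp x * m x) x :=
    hasDerivAt_setIntegral_Iic (continuous_exp.mul hmc) hm.integrableOn_Iic_exp_mul x
  have hR : HasDerivAt (rightExpIntegral m) (-(exp (-x) * m x)) x :=
    hasDerivAt_setIntegral_Ioi ((continuous_exp.comp continuous_neg).mul hmc)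
      hm.integrableOn_Ioi_exp_neg_mul x
  rw [funext (integral_pKer_sub_mul hm)]
  exact ((((hasDerivAt_neg x).exp.mul hL).add ((hasDerivAt_exp x).mul hR)).div_const 2)
    |>.congr_deriv (by ring)

theorem sq_sub_deriv_sq_eq_mul (hmc : Continuous m) (hm : Integrable m) {u : ℝ → ℝ}
    (hu : ∀ x, u x = ∫ y, pKer (x - y) * m y) (x : ℝ) :
    u x ^ 2 - deriv u x ^ 2 = leftExpIntegral m x * rightExpIntegral m x := by
  obtain rfl : u = fun x => ∫ y, pKer (x - y) * m y := funext hu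
  beta_reduce
  rw [(hasDerivAt_integral_pKer_sub_mul hmc hm x).deriv, integral_pKer_sub_mul hm x]
  have hexp : exp (-x) * exp x = 1 := by rw [← exp_add, neg_add_cancel, exp_zero]
  linear_combination (leftExpIntegral m x * rightExpIntegral m x) * hexp

end Convolution

/-- If `m` is continuous, integrable, `u = p * m`, and `m ≥ 0` on `(-∞, x₀]`,
`m ≤ 0` on `[x₀, ∞)`, then `u(x₀)² - u'(x₀)² ≤ 0`, i.e. `|u(x₀)| ≤ |u'(x₀)|`. -/
theorem sign_condition_square_nonpos
    (m : ℝ → ℝ) (hmc : Continuous m) (hmi : Integrable m)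
    (u : ℝ → ℝ) (hu : ∀ x, u x = ∫ y, pKer (x - y) * m y)
    (x₀ : ℝ)
    (hpos : ∀ x ≤ x₀, 0 ≤ m x) (hneg : ∀ x ≥ x₀, m x ≤ 0) :
    (u x₀) ^ 2 - (deriv u x₀) ^ 2 ≤ 0 ∧ |u x₀| ≤ |deriv u x₀| := by
  have hL : 0 ≤ leftExpIntegral m x₀ :=
    setIntegral_nonneg measurableSet_Iic fun y hy => mul_nonneg (exp_pos y).le (hpos y hy)
  have hR : rightExpIntegral m x₀ ≤ 0 :=
    setIntegral_nonpos measurableSet_Ioi fun y (hy : x₀ < y) =>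
      mul_nonpos_of_nonneg_of_nonpos (exp_pos (-y)).le (hneg y hy.le)
  have hsq : u x₀ ^ 2 - deriv u x₀ ^ 2 ≤ 0 := by
    rw [sq_sub_deriv_sq_eq_mul hmc hmi hu x₀]
    exact mul_nonpos_of_nonneg_of_nonpos hL hR
  exact ⟨hsq, sq_le_sq.1 (sub_nonpos.1 hsq)⟩
end

section
/- Let b ∈ ℝ, T > 0, and let u be a smooth solution of the b-equation m_t + u m_x + b u_x m = 0 on [0,T) × ℝ with m = u - u_xx, and let y(t,x) be the flow of u with y(0,x) = x and ∂_t y = u(t,y). Then for all (t,x) ∈ [0,T) × ℝ, m(t, y(t,x)) · (∂_x y(t,x))^b = m(0, x). -/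
open MeasureTheory Real Set intervalIntegral

/-- Conservation along the flow for the `b`-equation: if `m = u - u_xx` solves
`m_t + u m_x + b u_x m = 0` and `y` is the flow of `u`, then
`m(t, y(t,x)) (∂ₓ y(t,x))^b = m(0,x)`. -/
theorem b_equation_conservation_along_flow
    (b T : ℝ) (hT : 0 < T)
    (u m : ℝ → ℝ → ℝ)
    (hu : ContDiff ℝ (⊤ : ℕ∞) (fun p : ℝ × ℝ => u p.1 p.2))
    (hm : ∀ t x, m t x = u t x - deriv (deriv (u t)) x)
    (hpde : ∀ t ∈ Set.Ico (0 : ℝ) T, ∀ x,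
      deriv (fun s => m s x) t + u t x * deriv (m t) x + b * deriv (u t) x * m t x = 0)
    (y : ℝ → ℝ → ℝ)
    (hy0 : ∀ x, y 0 x = x)
    (hyt : ∀ x, ∀ t ∈ Set.Ico (0 : ℝ) T, HasDerivAt (fun s => y s x) (u t (y t x)) t)
    (hyx : ∀ t ∈ Set.Ico (0 : ℝ) T, ∀ x,
      deriv (y t) x = Real.exp (∫ s in (0 : ℝ)..t, deriv (u s) (y s x))) :
    ∀ t ∈ Set.Ico (0 : ℝ) T, ∀ x,
      m t (y t x) * (deriv (y t) x) ^ b = m 0 x := by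
  -- joint smoothness of the first spatial derivative of u
  have hD1 : ContDiff ℝ (⊤ : ℕ∞) (fun p : ℝ × ℝ => deriv (u p.1) p.2) := by
    have : (fun p : ℝ × ℝ => deriv (u p.1) p.2)
        = fun p : ℝ × ℝ => fderiv ℝ (u p.1) p.2 1 := rfl
    rw [this]
    refine ContDiff.fderiv_apply (f := fun (p : ℝ × ℝ) (x : ℝ) => u p.1 x)
      (g := fun p : ℝ × ℝ => p.2) (k := fun _ => 1) (m := ((⊤ : ℕ∞) : WithTop ℕ∞)) ?_ contDiff_snd contDiff_const (by exact_mod_cast le_top)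
    exact hu.comp (ContDiff.prodMk (E := (ℝ × ℝ) × ℝ) (contDiff_fst.comp contDiff_fst) contDiff_snd)
  have hD2 : ContDiff ℝ (⊤ : ℕ∞) (fun p : ℝ × ℝ => deriv (deriv (u p.1)) p.2) := by
    have : (fun p : ℝ × ℝ => deriv (deriv (u p.1)) p.2)
        = fun p : ℝ × ℝ => fderiv ℝ (deriv (u p.1)) p.2 1 := rfl
    rw [this]
    refine ContDiff.fderiv_apply (f := fun (p : ℝ × ℝ) => deriv (u p.1))
      (g := fun p : ℝ × ℝ => p.2) (k := fun _ => 1) (m := ((⊤ : ℕ∞) : WithTop ℕ∞)) ?_ contDiff_snd contDiff_const (by exact_mod_cast le_top)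
    exact hD1.comp (ContDiff.prodMk (E := (ℝ × ℝ) × ℝ) (contDiff_fst.comp contDiff_fst) contDiff_snd)
  have hM : ContDiff ℝ (⊤ : ℕ∞) (fun p : ℝ × ℝ => m p.1 p.2) := by
    have : (fun p : ℝ × ℝ => m p.1 p.2)
        = fun p : ℝ × ℝ => u p.1 p.2 - deriv (deriv (u p.1)) p.2 :=
      funext fun p => hm p.1 p.2
    rw [this]; exact hu.sub hD2
  set M : ℝ × ℝ → ℝ := fun p => m p.1 p.2 with hMdef
  have hMd : Differentiable ℝ M := hM.differentiable (by simp)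
  -- partial derivative identities
  have hpt : ∀ (s x' : ℝ), deriv (fun τ => m τ x') s = fderiv ℝ M (s, x') (1, 0) := by
    intro s x'
    have h1 : HasDerivAt (fun τ : ℝ => M (τ, x')) (fderiv ℝ M (s, x') (1, 0)) s :=
      (hMd (s, x')).hasFDerivAt.comp_hasDerivAt s (f := fun τ : ℝ => (τ, x'))
        ((hasDerivAt_id' s).prodMk (hasDerivAt_const s x'))
    exact h1.deriv
  have hpx : ∀ (s x' : ℝ), deriv (m s) x' = fderiv ℝ M (s, x') (0, 1) := by
    intro s x'
    have h1 : HasDerivAt (fun ξ : ℝ => M (s, ξ)) (fderiv ℝ M (s, x') (0, 1)) x' :=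
      (hMd (s, x')).hasFDerivAt.comp_hasDerivAt x'
        ((hasDerivAt_const x' s).prodMk (hasDerivAt_id x'))
    exact h1.deriv
  intro t ht x
  set w : ℝ → ℝ := fun s => deriv (u s) (y s x) with hwdef
  set I : ℝ → ℝ := fun s => ∫ r in (0:ℝ)..s, w r with hIdef
  set g : ℝ → ℝ := fun s => m s (y s x) * Real.exp (b * I s) with hgdef
  have hyc : ∀ s ∈ Set.Ico (0:ℝ) T, ContinuousAt (fun r => y r x) s :=
    fun s hs => (hyt x s hs).continuousAt
  have hw_contAt : ∀ s ∈ Set.Ico (0:ℝ) T, ContinuousAt w s := by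
    intro s hs
    exact (hD1.continuous.continuousAt).comp (continuousAt_id.prodMk (hyc s hs))
  have hw_contOn : ContinuousOn w (Set.Ico 0 T) :=
    fun s hs => (hw_contAt s hs).continuousWithinAt
  have hw_int : ∀ s ∈ Set.Ico (0:ℝ) T, IntervalIntegrable w volume 0 s := by
    intro s hs
    apply ContinuousOn.intervalIntegrable
    intro r hr
    rw [Set.uIcc_of_le hs.1] at hr
    exact (hw_contAt r ⟨hr.1, lt_of_le_of_lt hr.2 hs.2⟩).continuousWithinAt
  -- right derivative of the primitive I
  have hI : ∀ s ∈ Set.Ico (0:ℝ) T, HasDerivWithinAt I (w s) (Set.Ici s) s := by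
    intro s hs
    refine intervalIntegral.integral_hasDerivWithinAt_right (hw_int s hs) ?_ ?_
    · refine AEStronglyMeasurable.stronglyMeasurableAtFilter_of_mem
        (s := Set.Ioo s T) ?_ ?_
      · exact ((hw_contOn.mono (fun r hr => ⟨le_of_lt (lt_of_le_of_lt hs.1 hr.1), hr.2⟩)).aestronglyMeasurable
          measurableSet_Ioo)
      · exact Ioo_mem_nhdsGT_of_mem ⟨le_refl s, hs.2⟩
    · exact (hw_contAt s hs).continuousWithinAt
  -- derivative of s ↦ m s (y s x)
  have hmc : ∀ s ∈ Set.Ico (0:ℝ) T,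
      HasDerivAt (fun r => m r (y r x)) (fderiv ℝ M (s, y s x) (1, u s (y s x))) s := by
    intro s hs
    exact (hMd (s, y s x)).hasFDerivAt.comp_hasDerivAt s
      ((hasDerivAt_id s).prodMk (hyt x s hs))
  -- value of that derivative via the PDE
  have hDval : ∀ s ∈ Set.Ico (0:ℝ) T,
      fderiv ℝ M (s, y s x) (1, u s (y s x))
        = deriv (fun τ => m τ (y s x)) s + u s (y s x) * deriv (m s) (y s x) := by
    intro s hs
    rw [hpt, hpx]
    have h2 : ((1:ℝ), u s (y s x)) = (1, 0) + u s (y s x) • ((0:ℝ), (1:ℝ)) := by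
      simp
    rw [h2, map_add, ContinuousLinearMap.map_smul, smul_eq_mul]
  -- g has zero right derivative on [0, T)
  have hg : ∀ s ∈ Set.Ico (0:ℝ) T, HasDerivWithinAt g 0 (Set.Ici s) s := by
    intro s hs
    have hE : HasDerivWithinAt (fun r => Real.exp (b * I r))
        (Real.exp (b * I s) * (b * w s)) (Set.Ici s) s :=
      (((hI s hs).const_mul b).exp)
    have h1 : HasDerivWithinAt (fun r => m r (y r x))
        (fderiv ℝ M (s, y s x) (1, u s (y s x))) (Set.Ici s) s :=
      (hmc s hs).hasDerivWithinAt
    have hmul := h1.mul hE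
    have hp := hpde s hs (y s x)
    have hval : fderiv ℝ M (s, y s x) (1, u s (y s x)) * Real.exp (b * I s)
        + m s (y s x) * (Real.exp (b * I s) * (b * w s)) = 0 := by
      rw [hDval s hs]
      have hw' : w s = deriv (u s) (y s x) := rfl
      rw [hw']
      nlinarith [hp, Real.exp_pos (b * I s)]
    rwa [hval] at hmul
  -- g is constant on [0, t]
  have hsubset : Set.Icc (0:ℝ) t ⊆ Set.Ico 0 T :=
    fun s hs => ⟨hs.1, lt_of_le_of_lt hs.2 ht.2⟩
  have hgc : ContinuousOn g (Set.Icc 0 t) := by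
    apply ContinuousOn.mul
    · exact fun s hs => ((hmc s (hsubset hs)).continuousAt).continuousWithinAt
    · apply Continuous.comp_continuousOn Real.continuous_exp
      apply ContinuousOn.mul continuousOn_const
      have hint : IntegrableOn w (Set.uIcc 0 t) volume := by
        rw [Set.uIcc_of_le ht.1]
        exact ((hw_contOn.mono (fun r hr => ⟨hr.1, lt_of_le_of_lt hr.2 ht.2⟩)).integrableOn_compact
          isCompact_Icc)
      exact intervalIntegral.continuousOn_primitive_interval hint |>.mono
        (by rw [Set.uIcc_of_le ht.1])
  have key : ∀ s ∈ Set.Icc (0:ℝ) t, g s = g 0 := by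
    apply constant_of_has_deriv_right_zero hgc
    intro s hs
    exact hg s ⟨hs.1, hs.2.trans ht.2⟩
  have hgt : g t = g 0 := key t ⟨ht.1, le_refl t⟩
  have hg0 : g 0 = m 0 x := by
    simp only [hgdef, hIdef, intervalIntegral.integral_same, mul_zero, Real.exp_zero,
      hy0 x, mul_one]
  have hpow : (deriv (y t) x) ^ b = Real.exp (b * I t) := by
    rw [hyx t ht x]
    rw [Real.rpow_def_of_pos (Real.exp_pos _), Real.log_exp, mul_comm]
  calc m t (y t x) * (deriv (y t) x) ^ b = g t := by rw [hpow]
    _ = m 0 x := by rw [hgt, hg0]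
end
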